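/- (Block evolution for η = 1) Let n ≥ 4 and 2 ≤ ℓ ≤ n−2. Then the 1-block B(n,ℓ) is a fixed point of the deterministic global map Ψ₁ of the traffic-majority rule with η = 1: Ψ₁(B(n,ℓ)) = B(n,ℓ). Consequently Ψ₁^[t](B(n,ℓ)) = B(n,ℓ) for all t ∈ ℕ, so the evolution never reaches e₀ or e₁ and no correct classification ever occurs. -/
import Mathlib


/-- A configuration of the ring of `n` cells, each in a state from `Fin 2`. -/
abbrev Config (n : ℕ) := ZMod n → Fin 2

/-- The 1-block of length `ℓ`. -/
def block (n ℓ : ℕ) : Config n := fun x => if x.val < ℓ then 1 else 0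

/-- The constant configuration with all cells in state `σ`. -/
def endSt (n : ℕ) (σ : Fin 2) : Config n := fun _ => σ

/-- The deterministic global map `Ψ₁` of the traffic-majority rule with `η = 1`:
`φ₁(0,0,0)=0, φ₁(0,0,1)=0, φ₁(1,0,0)=0, φ₁(1,0,1)=1, φ₁(1,1,1)=1, φ₁(0,1,1)=1,
φ₁(1,1,0)=1, φ₁(0,1,0)=0`. -/
def psi1 (n : ℕ) (c : Config n) : Config n := fun x =>
  if c x = 0 then (if c (x - 1) = 1 ∧ c (x + 1) = 1 then 1 else 0)
  else (if c (x - 1) = 0 ∧ c (x + 1) = 0 then 0 else 1)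

lemma sub_one_val (n : ℕ) (hn : 4 ≤ n) (x : ZMod n) :
    (x - 1).val = if x.val = 0 then n - 1 else x.val - 1 := by
  haveI : NeZero n := ⟨by omega⟩
  haveI : Fact (1 < n) := ⟨by omega⟩
  have hlt : x.val < n := x.val_lt
  have h1 : (1 : ZMod n).val = 1 := ZMod.val_one n
  have key : x - 1 = x + ((n - 1 : ℕ) : ZMod n) := by
    have : ((n - 1 : ℕ) : ZMod n) = ((n : ℕ) : ZMod n) - 1 := by
      push_cast [Nat.cast_sub (by omega : 1 ≤ n)]; ring
    rw [this, ZMod.natCast_self]; ring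
  rw [key, ZMod.val_add, ZMod.val_cast_of_lt (by omega : n - 1 < n)]
  split_ifs with h
  · rw [h]
    have h19 : 0 + (n - 1) = n - 1 := by omega
    rw [h19, Nat.mod_eq_of_lt (by omega)]
  · have : x.val + (n - 1) = (x.val - 1) + n := by omega
    rw [this, Nat.add_mod_right, Nat.mod_eq_of_lt (by omega)]

lemma add_one_val (n : ℕ) (hn : 4 ≤ n) (x : ZMod n) :
    (x + 1).val = if x.val = n - 1 then 0 else x.val + 1 := by
  haveI : NeZero n := ⟨by omega⟩
  haveI : Fact (1 < n) := ⟨by omega⟩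
  have hlt : x.val < n := x.val_lt
  have h1 : (1 : ZMod n).val = 1 := ZMod.val_one n
  rw [ZMod.val_add, h1]
  split_ifs with h
  · rw [h]
    have h19 : n - 1 + 1 = n := by omega
    rw [h19, Nat.mod_self]
  · exact Nat.mod_eq_of_lt (by omega)

/-- Block evolution for `η = 1`: for `n ≥ 4` and `2 ≤ ℓ ≤ n - 2`,
the 1-block `B(n,ℓ)` is a fixed point of `Ψ₁`; consequently all iterates equal
`B(n,ℓ)`, the evolution never reaches `e₀` or `e₁`, and no correct
classification ever occurs. -/
theorem block_eta_one (n : ℕ) (hn : 4 ≤ n) (ℓ : ℕ) (h2 : 2 ≤ ℓ) (hℓ : ℓ ≤ n - 2) :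
    psi1 n (block n ℓ) = block n ℓ ∧
    (∀ t : ℕ, (psi1 n)^[t] (block n ℓ) = block n ℓ) ∧
    (∀ t : ℕ, (psi1 n)^[t] (block n ℓ) ≠ endSt n 0 ∧
      (psi1 n)^[t] (block n ℓ) ≠ endSt n 1) := by
  haveI : NeZero n := ⟨by omega⟩
  have hfix : psi1 n (block n ℓ) = block n ℓ := by
    funext x
    have hlt : x.val < n := x.val_lt
    have hm := sub_one_val n hn x
    have hp := add_one_val n hn x
    simp only [psi1, block, hm, hp]
    rcases eq_or_ne x.val 0 with h0 | h0
    · rw [if_pos h0, if_neg (show ¬ x.val = n - 1 by omega),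
        if_neg (show ¬ n - 1 < ℓ by omega), if_pos (show x.val + 1 < ℓ by omega),
        if_pos (show x.val < ℓ by omega)]
      norm_num
    · rcases lt_or_ge x.val ℓ with hxℓ | hxℓ
      · rw [if_neg h0, if_pos (show x.val - 1 < ℓ by omega),
          if_pos (show x.val < ℓ by omega)]
        norm_num
      · rcases eq_or_ne x.val (n - 1) with hN | hN
        · rw [if_neg h0, if_pos hN, if_neg (show ¬ x.val - 1 < ℓ by omega),
            if_neg (show ¬ x.val < ℓ by omega), if_pos (show 0 < ℓ by omega)]
          norm_num
        · rw [if_neg h0, if_neg hN, if_neg (show ¬ x.val + 1 < ℓ by omega),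
            if_neg (show ¬ x.val < ℓ by omega)]
          norm_num
  have hiter : ∀ t : ℕ, (psi1 n)^[t] (block n ℓ) = block n ℓ :=
    fun t => Function.iterate_fixed hfix t
  refine ⟨hfix, hiter, fun t => ?_⟩
  rw [hiter]
  constructor
  · intro h
    have := congrFun h (0 : ZMod n)
    simp [block, endSt, ZMod.val_zero, (by omega : 0 < ℓ)] at this
  · intro h
    have := congrFun h ((ℓ : ℕ) : ZMod n)
    rw [block, endSt] at this
    rw [ZMod.val_cast_of_lt (by omega : ℓ < n)] at this
    simp at this
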